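/- Let ω ∈ {0,1,2}^ℕ be a non-constant sequence and define M as follows: M = max{i_0(σω), i_1(σω), i_2(σω)} + 4 if all three of i_0(σω), i_1(σω), i_2(σω) are finite; M = max{i_j(σω) : j ≠ k} + 4 if exactly one i_k(σω) is infinite; and M = 4 if σω is a constant sequence. Then for every n ≥ M, writing 2^e for the exponent of the finite 2-group Q = G_ω/St_{G_ω}(n), the group Q is not semi-2^{e-1}-abelian; that is, there exist x, y ∈ Q with x^{2^{e-1}} = y^{2^{e-1}} and (x y^{-1})^{2^{e-1}} ≠ 1. -/

import Mathlib

namespace Grig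

/-- Sequences ω ∈ {0,1,2}^ℕ (0-indexed: `ω n` is the paper's ω_{n+1}). -/
abbrev Seq := ℕ → Fin 3

/-- The shifted sequence σω. -/
def shift (ω : Seq) : Seq := fun n => ω (n + 1)

/-- The n-fold shifted sequence σⁿω. -/
def shiftn (n : ℕ) (ω : Seq) : Seq := fun m => ω (m + n)

/-- The rooted automorphism `a`, as a map on words over {0,1} (encoded as `List Bool`). -/
def aMap : List Bool → List Bool
  | [] => []
  | x :: w => (!x) :: w

lemma aMap_invol : ∀ w, aMap (aMap w) = w := by
  intro w; cases w <;> simp [aMap]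

/-- The rooted automorphism `a`. -/
def aPerm : Equiv.Perm (List Bool) := ⟨aMap, aMap, aMap_invol, aMap_invol⟩

/-- The directed automorphism with "trivial tag" `k` of the Grigorchuk group `G_ω`:
`k = 2` gives `b_ω`, `k = 1` gives `c_ω`, `k = 0` gives `d_ω`.  Its section at the
vertex 1 is the corresponding automorphism for σω, and its section at the vertex 0
is `a` if ω₁ ≠ k and trivial if ω₁ = k. -/
def genMap (k : Fin 3) : Seq → List Bool → List Bool
  | _, [] => []
  | ω, false :: w => false :: (if ω 0 = k then w else aMap w)
  | ω, true :: w => true :: genMap k (shift ω) w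

lemma genMap_invol (k : Fin 3) : ∀ (w : List Bool) (ω : Seq), genMap k ω (genMap k ω w) = w := by
  intro w
  induction w with
  | nil => intro ω; rfl
  | cons x w ih =>
      intro ω
      cases x with
      | false => by_cases h : ω 0 = k <;> simp [genMap, h, aMap_invol]
      | true => simp [genMap, ih]

def genPerm (k : Fin 3) (ω : Seq) : Equiv.Perm (List Bool) :=
  ⟨genMap k ω, genMap k ω, fun w => genMap_invol k w ω, fun w => genMap_invol k w ω⟩

/-- The generator `b_ω`. -/
def b (ω : Seq) : Equiv.Perm (List Bool) := genPerm 2 ω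
/-- The generator `c_ω`. -/
def c (ω : Seq) : Equiv.Perm (List Bool) := genPerm 1 ω
/-- The generator `d_ω`. -/
def d (ω : Seq) : Equiv.Perm (List Bool) := genPerm 0 ω

/-- The Grigorchuk group `G_ω = ⟨a, b_ω, c_ω, d_ω⟩`, as a subgroup of the group of
permutations of the vertices of the binary rooted tree.  (Every generator preserves
word length and prefixes, so `G_ω` consists of automorphisms of the tree.) -/
def G (ω : Seq) : Subgroup (Equiv.Perm (List Bool)) :=
  Subgroup.closure {aPerm, b ω, c ω, d ω}

lemma aPerm_mem (ω : Seq) : aPerm ∈ G ω := Subgroup.subset_closure (by simp)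
lemma b_mem (ω : Seq) : b ω ∈ G ω := Subgroup.subset_closure (by simp)
lemma c_mem (ω : Seq) : c ω ∈ G ω := Subgroup.subset_closure (by simp)
lemma d_mem (ω : Seq) : d ω ∈ G ω := Subgroup.subset_closure (by simp)

/-- `a` as an element of `G_ω`. -/
def aSub (ω : Seq) : ↥(G ω) := ⟨aPerm, aPerm_mem ω⟩
/-- `b_ω` as an element of `G_ω`. -/
def bSub (ω : Seq) : ↥(G ω) := ⟨b ω, b_mem ω⟩
/-- `c_ω` as an element of `G_ω`. -/
def cSub (ω : Seq) : ↥(G ω) := ⟨c ω, c_mem ω⟩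
/-- `d_ω` as an element of `G_ω`. -/
def dSub (ω : Seq) : ↥(G ω) := ⟨d ω, d_mem ω⟩

/-- The subgroup of permutations of the tree fixing every vertex of level `n`. -/
def levelStab (n : ℕ) : Subgroup (Equiv.Perm (List Bool)) where
  carrier := {f | ∀ w : List Bool, w.length = n → f w = w}
  one_mem' := by intro w _; rfl
  mul_mem' := by
    intro f g hf hg w hw
    rw [Equiv.Perm.mul_apply, hg w hw, hf w hw]
  inv_mem' := by
    intro f hf w hw
    calc f⁻¹ w = f⁻¹ (f w) := by rw [hf w hw]
    _ = w := (show f⁻¹ (f w) = w from f.symm_apply_apply w)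

/-- The `n`-th level stabiliser `St_{G_ω}(n)` (as a subgroup of the ambient
permutation group). -/
def St (ω : Seq) (n : ℕ) : Subgroup (Equiv.Perm (List Bool)) := G ω ⊓ levelStab n

/-- The `n`-th level stabiliser `St_{G_ω}(n)` seen as a subgroup of `G_ω`. -/
def stab (ω : Seq) (n : ℕ) : Subgroup ↥(G ω) := (levelStab n).subgroupOf (G ω)

lemma aMap_length (w : List Bool) : (aMap w).length = w.length := by
  cases w <;> simp [aMap]

lemma genMap_length (k : Fin 3) :
    ∀ (w : List Bool) (ω : Seq), (genMap k ω w).length = w.length := by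
  intro w
  induction w with
  | nil => intro ω; rfl
  | cons x w ih =>
      intro ω
      cases x with
      | false => by_cases h : ω 0 = k <;> simp [genMap, h, aMap_length]
      | true => simp [genMap, ih]

/-- The subgroup of length-preserving permutations of the set of words. -/
def lenPres : Subgroup (Equiv.Perm (List Bool)) where
  carrier := {f | ∀ w : List Bool, (f w).length = w.length}
  one_mem' := by intro w; rfl
  mul_mem' := by
    intro f g hf hg w
    rw [Equiv.Perm.mul_apply, hf, hg]
  inv_mem' := by
    intro f hf w
    conv_rhs => rw [← (show f (f⁻¹ w) = w from f.apply_symm_apply w)]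
    rw [hf]

lemma G_le_lenPres (ω : Seq) : G ω ≤ lenPres := by
  rw [G]
  refine (Subgroup.closure_le _).2 ?_
  intro x hx
  simp only [Set.mem_insert_iff, Set.mem_singleton_iff] at hx
  rcases hx with rfl | rfl | rfl | rfl
  · exact fun w => aMap_length w
  · exact fun w => genMap_length 2 w ω
  · exact fun w => genMap_length 1 w ω
  · exact fun w => genMap_length 0 w ω

instance stab_normal (ω : Seq) (n : ℕ) : (stab ω n).Normal := by
  constructor
  intro h hh g
  simp only [stab, Subgroup.mem_subgroupOf] at hh ⊢
  intro w hw
  have hginv : ((g : Equiv.Perm (List Bool))⁻¹ w).length = n := by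
    rw [G_le_lenPres ω ((G ω).inv_mem g.2) w, hw]
  have : ((h : Equiv.Perm (List Bool))) ((g : Equiv.Perm (List Bool))⁻¹ w)
      = (g : Equiv.Perm (List Bool))⁻¹ w := hh _ hginv
  simp only [Subgroup.coe_mul, InvMemClass.coe_inv, Equiv.Perm.mul_apply]
  rw [this, show ∀ (e : Equiv.Perm (List Bool)) (x : List Bool), e (e⁻¹ x) = x from
    fun e x => e.apply_symm_apply x]

/-- A (spherical) system of generators of a group. -/
def SphericalSystem {Q : Type*} [Group Q] {r : ℕ} (T : Fin r → Q) : Prop :=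
  3 ≤ r ∧ (∀ i, T i ≠ 1) ∧ Subgroup.closure (Set.range T) = ⊤ ∧ (List.ofFn T).prod = 1

/-- The set Σ(T): the union of all conjugates of the cyclic subgroups generated by
the entries of `T`. -/
def SigmaSet {Q : Type*} [Group Q] {r : ℕ} (T : Fin r → Q) : Set Q :=
  ⋃ (g : Q) (i : Fin r), (fun x => g⁻¹ * x * g) '' (Subgroup.zpowers (T i) : Set Q)

/-- An (unmixed) ramification structure of size `(r₁, r₂)` for a group `Q`. -/
def HasRamificationStructure (Q : Type*) [Group Q] (r₁ r₂ : ℕ) : Prop :=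
  ∃ (T₁ : Fin r₁ → Q) (T₂ : Fin r₂ → Q),
    SphericalSystem T₁ ∧ SphericalSystem T₂ ∧ SigmaSet T₁ ∩ SigmaSet T₂ = {1}

/-- `i_k(ω) = min {n ≥ 1 : ω_n = k}` (meaningful when some entry of ω equals `k`;
with our 0-indexing this is `sInf {n | ω n = k} + 1`). -/
noncomputable def ikFin (k : Fin 3) (ω : Seq) : ℕ := sInf {n | ω n = k} + 1

/-- `m(ω) = max {n ≥ 1 : ω_1 = ⋯ = ω_n}` for a non-constant sequence ω;
with our 0-indexing this is the least index where ω differs from ω 0. -/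
noncomputable def mval (ω : Seq) : ℕ := sInf {n | ω n ≠ ω 0}


/-- The normal closure of the element `x` relative to the subgroup `H`:
the subgroup generated by all `H`-conjugates of `x`. -/
def nclIn (H : Subgroup (Equiv.Perm (List Bool))) (x : Equiv.Perm (List Bool)) :
    Subgroup (Equiv.Perm (List Bool)) :=
  Subgroup.closure {y | ∃ g ∈ H, y = g * x * g⁻¹}

/-- The `d`-generator of `G_ω`: `d_ω` if ω₁ = 0, `c_ω` if ω₁ = 1 and `b_ω` if ω₁ = 2;
with our encoding this is simply `genPerm (ω 0) ω`. -/
def dGenPerm (ω : Seq) : Equiv.Perm (List Bool) := genPerm (ω 0) ω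

/-- The subgroup of permutations fixing every word that does not have `u` as a prefix. -/
def awayStab (u : List Bool) : Subgroup (Equiv.Perm (List Bool)) where
  carrier := {f | ∀ w : List Bool, ¬ u <+: w → f w = w}
  one_mem' := by intro w _; rfl
  mul_mem' := by
    intro f g hf hg w hw
    rw [Equiv.Perm.mul_apply, hg w hw, hf w hw]
  inv_mem' := by
    intro f hf w hw
    calc f⁻¹ w = f⁻¹ (f w) := by rw [hf w hw]
    _ = w := (show f⁻¹ (f w) = w from f.symm_apply_apply w)

/-- The rigid vertex stabiliser `Rist_{G_ω}(u)`. -/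
def Rist (ω : Seq) (u : List Bool) : Subgroup (Equiv.Perm (List Bool)) :=
  G ω ⊓ awayStab u

/-- The section map φ_u : for an automorphism `f` fixing the vertex `u`, the value
`sectionFun u f` is the section of `f` at `u` (as a map on words). -/
def sectionFun (u : List Bool) (f : Equiv.Perm (List Bool)) : List Bool → List Bool :=
  fun v => (f (u ++ v)).drop u.length

/-- The `d`-generator `x_ω` of `G_ω`, as an element of `G_ω`. -/
def xGen (ω : Seq) : ↥(G ω) :=
  if ω 0 = 0 then ⟨d ω, Subgroup.subset_closure (by simp)⟩
  else if ω 0 = 1 then ⟨c ω, Subgroup.subset_closure (by simp)⟩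
  else ⟨b ω, Subgroup.subset_closure (by simp)⟩

/-- The `c`-generator `y_ω` of `G_ω` (determined by ω_{m(ω)+1}), as an element of `G_ω`. -/
noncomputable def yGen (ω : Seq) : ↥(G ω) :=
  if ω (mval ω) = 0 then ⟨d ω, Subgroup.subset_closure (by simp)⟩
  else if ω (mval ω) = 1 then ⟨c ω, Subgroup.subset_closure (by simp)⟩
  else ⟨b ω, Subgroup.subset_closure (by simp)⟩

open scoped Classical in
/-- The bound `M` of the main theorem. -/
noncomputable def Mval (ω : Seq) : ℕ :=
  if ∀ k : Fin 3, ∃ n, shift ω n = k then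
    (Finset.univ.sup fun k : Fin 3 => ikFin k (shift ω)) + 4
  else if ∀ n, shift ω n = shift ω 0 then 4
  else ((Finset.univ.filter fun k : Fin 3 => ∃ n, shift ω n = k).sup
          fun k => ikFin k (shift ω)) + 4


end Grig

namespace Grig

/-! ### Auxiliary material for the proof -/

/-- Prefixes of the same list of the same length are equal. -/
lemma prefix_eq_of_length {α : Type*} {p₁ p₂ l : List α} (h₁ : p₁ <+: l) (h₂ : p₂ <+: l)
    (h : p₁.length = p₂.length) : p₁ = p₂ :=
  (List.prefix_of_prefix_length_le h₁ h₂ h.le).eq_of_length h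

/-- The subgroup of length- and prefix-preserving permutations (automorphisms of the tree). -/
def autT : Subgroup (Equiv.Perm (List Bool)) where
  carrier := {f | (∀ w : List Bool, (f w).length = w.length) ∧
      ∀ u w : List Bool, u <+: w → f u <+: f w}
  one_mem' := ⟨fun _ => rfl, fun _ _ h => h⟩
  mul_mem' := by
    rintro f g ⟨hf1, hf2⟩ ⟨hg1, hg2⟩
    refine ⟨fun w => ?_, fun u w h => ?_⟩
    · rw [Equiv.Perm.mul_apply, hf1, hg1]
    · rw [Equiv.Perm.mul_apply, Equiv.Perm.mul_apply]
      exact hf2 _ _ (hg2 _ _ h)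
  inv_mem' := by
    rintro f ⟨hf1, hf2⟩
    have hlen : ∀ w : List Bool, (f⁻¹ w).length = w.length := by
      intro w
      have := hf1 (f⁻¹ w)
      rw [show f (f⁻¹ (w)) = w from f.apply_symm_apply w] at this
      exact this.symm
    refine ⟨hlen, fun u w h => ?_⟩
    have hle : (f⁻¹ u).length ≤ (f⁻¹ w).length := by
      rw [hlen, hlen]; exact h.length_le
    have hp : (f⁻¹ w).take (f⁻¹ u).length <+: f⁻¹ w := List.take_prefix _ _
    have hfp : f ((f⁻¹ w).take (f⁻¹ u).length) <+: f (f⁻¹ w) := hf2 _ _ hp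
    rw [show f (f⁻¹ w) = w from f.apply_symm_apply w] at hfp
    have hlen2 : (f ((f⁻¹ w).take (f⁻¹ u).length)).length = u.length := by
      rw [hf1, List.length_take, Nat.min_eq_left hle, hlen]
    have heq : (f⁻¹ w).take (f⁻¹ u).length = f⁻¹ u := by
      apply f.injective
      rw [prefix_eq_of_length hfp h hlen2, show f (f⁻¹ u) = u from f.apply_symm_apply u]
    rw [← heq]
    exact hp

lemma mem_autT {f : Equiv.Perm (List Bool)} :
    f ∈ autT ↔ (∀ w : List Bool, (f w).length = w.length) ∧
      ∀ u w : List Bool, u <+: w → f u <+: f w := Iff.rfl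

lemma aMap_prefix {u w : List Bool} (h : u <+: w) : aMap u <+: aMap w := by
  obtain ⟨v, rfl⟩ := h
  cases u with
  | nil => exact List.nil_prefix
  | cons x u => exact ⟨v, rfl⟩

lemma genMap_prefix (k : Fin 3) :
    ∀ (u v : List Bool) (ω : Seq), genMap k ω u <+: genMap k ω (u ++ v) := by
  intro u
  induction u with
  | nil => intro v ω; exact List.nil_prefix
  | cons x u ih =>
      intro v ω
      cases x with
      | false =>
          show (false :: _) <+: (false :: _)
          rw [List.cons_prefix_cons]
          refine ⟨rfl, ?_⟩
          by_cases h : ω 0 = k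
          · simp only [if_pos h]
            exact ⟨v, rfl⟩
          · simp only [if_neg h]
            exact aMap_prefix ⟨v, rfl⟩
      | true =>
          show (true :: _) <+: (true :: _)
          rw [List.cons_prefix_cons]
          exact ⟨rfl, ih v (shift ω)⟩

lemma G_le_autT (ω : Seq) : G ω ≤ autT := by
  rw [G]
  refine (Subgroup.closure_le _).2 ?_
  intro x hx
  simp only [Set.mem_insert_iff, Set.mem_singleton_iff] at hx
  rcases hx with rfl | rfl | rfl | rfl
  · exact ⟨fun w => aMap_length w, fun u w h => aMap_prefix h⟩
  · exact ⟨fun w => genMap_length 2 w ω,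
      fun u w h => by obtain ⟨v, rfl⟩ := h; exact genMap_prefix 2 u v ω⟩
  · exact ⟨fun w => genMap_length 1 w ω,
      fun u w h => by obtain ⟨v, rfl⟩ := h; exact genMap_prefix 1 u v ω⟩
  · exact ⟨fun w => genMap_length 0 w ω,
      fun u w h => by obtain ⟨v, rfl⟩ := h; exact genMap_prefix 0 u v ω⟩

lemma mem_levelStab {f : Equiv.Perm (List Bool)} {n : ℕ} :
    f ∈ levelStab n ↔ ∀ w : List Bool, w.length = n → f w = w := Iff.rfl

/-- An automorphism fixing level `n` fixes every lower level. -/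
lemma levelStab_mono {f : Equiv.Perm (List Bool)} (hf : f ∈ autT) {m n : ℕ} (hmn : m ≤ n)
    (h : f ∈ levelStab n) : f ∈ levelStab m := by
  rw [mem_levelStab] at h ⊢
  intro w hw
  have hlen : (w ++ List.replicate (n - m) false).length = n := by
    simp [hw]; omega
  have hfix := h _ hlen
  have hpre : f w <+: w ++ List.replicate (n - m) false := by
    have := hf.2 w (w ++ List.replicate (n - m) false) (List.prefix_append _ _)
    rwa [hfix] at this
  exact prefix_eq_of_length hpre (List.prefix_append _ _) (by rw [hf.1 w])

/-- Any tree automorphism has `2`-power order modulo each level stabiliser. -/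
lemma pow_two_pow_mem_levelStab {f : Equiv.Perm (List Bool)} (hf : f ∈ autT) :
    ∀ n : ℕ, f ^ (2 ^ n) ∈ levelStab n := by
  intro n
  induction n with
  | zero =>
      rw [pow_zero, pow_one, mem_levelStab]
      intro w hw
      have h0 : (f w).length = 0 := by rw [hf.1 w, hw]
      rw [List.length_eq_zero_iff] at h0
      rw [h0, List.length_eq_zero_iff.mp hw]
  | succ n ih =>
      have hgA : f ^ (2 ^ n) ∈ autT := pow_mem hf _
      set g := f ^ (2 ^ n) with hg
      have hfiber : ∀ (u : List Bool), u.length = n → ∀ x : Bool,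
          ∃ y : Bool, g (u ++ [x]) = u ++ [y] := by
        intro u hu x
        have hpre : g u <+: g (u ++ [x]) := hgA.2 _ _ (List.prefix_append _ _)
        rw [ih u hu] at hpre
        obtain ⟨t, ht⟩ := hpre
        have hlt : t.length = 1 := by
          have hl := hgA.1 (u ++ [x])
          rw [← ht] at hl
          simp only [List.length_append, List.length_singleton, hu] at hl
          omega
        obtain ⟨y, rfl⟩ := List.length_eq_one_iff.mp hlt
        exact ⟨y, ht.symm⟩
      have hpow : f ^ (2 ^ (n + 1)) = g * g := by
        rw [pow_succ, pow_mul, sq]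
      rw [hpow, mem_levelStab]
      intro w hw
      have hwne : w ≠ [] := by
        intro h; rw [h] at hw; simp at hw
      obtain ⟨u, x, rfl, hu⟩ : ∃ u x, u ++ [x] = w ∧ u.length = n := by
        refine ⟨w.dropLast, w.getLast hwne, List.dropLast_append_getLast hwne, ?_⟩
        rw [List.length_dropLast, hw]
        omega
      obtain ⟨y, hy⟩ := hfiber u hu x
      obtain ⟨y', hy'⟩ := hfiber u hu y
      rw [Equiv.Perm.mul_apply, hy, hy']
      have hyx : y' = x := by
        by_cases hxy : y = x
        · rw [hxy] at hy hy'
          have := hy.symm.trans hy'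
          simpa using this.symm
        · have hyy : y' ≠ y := by
            intro h
            rw [h] at hy'
            have := g.injective (hy.trans hy'.symm)
            simp at this
            exact hxy this.symm
          cases x <;> cases y <;> cases y' <;> simp_all
      rw [hyx]

/-- **Key abstract lemma.** A group generated by involutions containing an element whose
`q`-th power (for `q` even) is nontrivial is not "semi-`q`-abelian". -/
lemma not_semi_of_invol_gen {Q : Type*} [Group Q] (S : Set Q)
    (hS : ∀ s ∈ S, s * s = 1) (hgen : Subgroup.closure S = ⊤)
    (q : ℕ) (hq : Even q) (z : Q) (hz : z ^ q ≠ 1) :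
    ∃ x y : Q, x ^ q = y ^ q ∧ (x * y⁻¹) ^ q ≠ 1 := by
  classical
  have hrev : ∀ l : List Q, (∀ s ∈ l, s ∈ S) → l.reverse.prod * l.prod = 1 := by
    intro l
    induction l with
    | nil => simp
    | cons s l ih =>
        intro h
        have hs := hS s (h s (by simp))
        have hl := ih (fun t ht => h t (by simp [ht]))
        simp only [List.reverse_cons, List.prod_append, List.prod_cons, List.prod_nil, mul_one]
        calc l.reverse.prod * s * (s * l.prod)
            = l.reverse.prod * (s * s) * l.prod := by group
        _ = l.reverse.prod * l.prod := by rw [hs, mul_one]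
        _ = 1 := hl
  have hrep : ∀ g : Q, ∃ l : List Q, (∀ s ∈ l, s ∈ S) ∧ l.prod = g := by
    intro g
    have hg : g ∈ Subgroup.closure S := by rw [hgen]; trivial
    induction hg using Subgroup.closure_induction with
    | mem s hs => exact ⟨[s], by simp [hs], by simp⟩
    | one => exact ⟨[], by simp, rfl⟩
    | mul x y hx hy ihx ihy =>
        obtain ⟨lx, hlx, rfl⟩ := ihx
        obtain ⟨ly, hly, rfl⟩ := ihy
        refine ⟨lx ++ ly, ?_, List.prod_append⟩
        intro s hs
        rcases List.mem_append.mp hs with h | h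
        · exact hlx s h
        · exact hly s h
    | inv x hx ihx =>
        obtain ⟨l, hl, rfl⟩ := ihx
        exact ⟨l.reverse, fun s hs => hl s (List.mem_reverse.mp hs),
          eq_inv_of_mul_eq_one_left (hrev l hl)⟩
  have hPex : ∃ m : ℕ, ∃ l : List Q, (∀ s ∈ l, s ∈ S) ∧ l.length = m ∧ l.prod ^ q ≠ 1 := by
    obtain ⟨l, hl, hpl⟩ := hrep z
    exact ⟨l.length, l, hl, rfl, by rw [hpl]; exact hz⟩
  obtain ⟨l, hlS, hlen, hlne⟩ := Nat.find_spec hPex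
  match l, hlen, hlS, hlne with
  | [], hlen, hlS, hlne => exact absurd (by simp) hlne
  | u :: w, hlen, hlS, hlne =>
    have hwq : w.prod ^ q = 1 := by
      by_contra h'
      have hlt : w.length < Nat.find hPex := by
        rw [← hlen]; simp
      exact Nat.find_min hPex hlt ⟨w, fun s hs => hlS s (by simp [hs]), rfl, h'⟩
    obtain ⟨r, hr⟩ := hq
    have hu : u * u = 1 := hS u (hlS u (by simp))
    have huq : u ^ q = 1 := by
      rw [hr, pow_add, ← (Commute.refl u).mul_pow, hu, one_pow]
    refine ⟨u, (w.prod)⁻¹, ?_, ?_⟩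
    · rw [huq, inv_pow, hwq, inv_one]
    · rw [inv_inv]
      intro h
      apply hlne
      rw [List.prod_cons]
      exact h

set_option maxRecDepth 4000 in
/-- The key computation: `(a · t)²` moves the word `0000` when `t` is a generator
with `ω₁`-tag different from `ω₁`. -/
lemma gsq_moves (ω : Seq) :
    ((aPerm * genPerm (ω 0 + 1) ω) ^ 2) [false, false, false, false] ≠
      [false, false, false, false] := by
  have h0 : ¬ (ω 0 = ω 0 + 1) := by
    have : ∀ x : Fin 3, ¬ (x = x + 1) := by decide
    exact this (ω 0)
  rw [sq]
  simp only [Equiv.Perm.mul_apply]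
  show aMap (genMap (ω 0 + 1) ω (aMap (genMap (ω 0 + 1) ω [false, false, false, false]))) ≠ _
  by_cases h2 : shift (shift ω) 0 = ω 0 + 1 <;>
    simp [genMap, aMap, h0, h2]

lemma genPerm_mem (k : Fin 3) (ω : Seq) : genPerm k ω ∈ G ω := by
  have h3 : k = 0 ∨ k = 1 ∨ k = 2 := by omega
  rcases h3 with rfl | rfl | rfl
  · exact d_mem ω
  · exact c_mem ω
  · exact b_mem ω

lemma aPerm_sq : aPerm * aPerm = 1 :=
  Equiv.ext fun w => aMap_invol w

lemma genPerm_sq (k : Fin 3) (ω : Seq) : genPerm k ω * genPerm k ω = 1 :=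
  Equiv.ext fun w => genMap_invol k w ω

/-- For a non-constant ω and `n ≥ M` (where `M` is as in the main
theorem), writing `2^e` for the exponent of the finite 2-group `Q = G_ω/St_{G_ω}(n)`,
the group `Q` is not semi-`2^{e-1}`-abelian: there are `x, y ∈ Q` with
`x^{2^{e-1}} = y^{2^{e-1}}` but `(x y⁻¹)^{2^{e-1}} ≠ 1`. -/
theorem quotient_not_semiAbelian (ω : Seq) (hnc : ¬ ∀ m, ω m = ω 0) (n : ℕ)
    (hn : Mval ω ≤ n) :
    ∃ e : ℕ, Monoid.exponent (↥(G ω) ⧸ stab ω n) = 2 ^ e ∧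
      ∃ x y : ↥(G ω) ⧸ stab ω n,
        x ^ 2 ^ (e - 1) = y ^ 2 ^ (e - 1) ∧ (x * y⁻¹) ^ 2 ^ (e - 1) ≠ 1 := by
  classical
  have hGsub : G ω ≤ autT := G_le_autT ω
  have h4n : 4 ≤ n := by
    refine le_trans ?_ hn
    unfold Mval
    split_ifs <;> omega
  set Q := ↥(G ω) ⧸ stab ω n with hQ
  set π : ↥(G ω) →* Q := QuotientGroup.mk' (stab ω n) with hπ
  -- every element of Q has 2-power order
  have hmemstab : ∀ (g : ↥(G ω)) (m : ℕ), ((g : Equiv.Perm (List Bool)) ^ m ∈ levelStab n) →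
      g ^ m ∈ stab ω n := by
    intro g m h
    rw [stab, Subgroup.mem_subgroupOf]
    simpa using h
  have hpow : ∀ x : Q, x ^ (2 ^ n) = 1 := by
    intro x
    obtain ⟨g, rfl⟩ := QuotientGroup.mk'_surjective (stab ω n) x
    rw [← map_pow]
    rw [QuotientGroup.mk'_apply, QuotientGroup.eq_one_iff]
    exact hmemstab g _ (pow_two_pow_mem_levelStab (hGsub g.2) n)
  have hdvd : Monoid.exponent Q ∣ 2 ^ n := Monoid.exponent_dvd_of_forall_pow_eq_one hpow
  obtain ⟨e, hele, hexp⟩ := (Nat.dvd_prime_pow Nat.prime_two).mp hdvd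
  refine ⟨e, hexp, ?_⟩
  -- the element of order at least 4
  have hgmem : aPerm * genPerm (ω 0 + 1) ω ∈ G ω :=
    mul_mem (aPerm_mem ω) (genPerm_mem _ ω)
  set gv : ↥(G ω) := ⟨aPerm * genPerm (ω 0 + 1) ω, hgmem⟩ with hgv
  have hQg : (π gv) ^ 2 ≠ 1 := by
    intro h
    rw [← map_pow, QuotientGroup.mk'_apply, QuotientGroup.eq_one_iff, stab,
      Subgroup.mem_subgroupOf] at h
    have h' : ((aPerm * genPerm (ω 0 + 1) ω) ^ 2) ∈ levelStab n := by simpa using h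
    have h4 : ((aPerm * genPerm (ω 0 + 1) ω) ^ 2) ∈ levelStab 4 :=
      levelStab_mono (pow_mem (hGsub hgmem) 2) h4n h'
    exact gsq_moves ω (h4 [false, false, false, false] rfl)
  -- e ≥ 2
  have he2 : 2 ≤ e := by
    by_contra h
    push_neg at h
    have : 2 ^ e ∣ 2 := by
      calc 2 ^ e ∣ 2 ^ 1 := pow_dvd_pow 2 (by omega)
      _ = 2 := pow_one 2
    have hdvd2 : Monoid.exponent Q ∣ 2 := by rw [hexp]; exact this
    obtain ⟨c, hc⟩ := hdvd2
    apply hQg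
    rw [hc, pow_mul, Monoid.pow_exponent_eq_one, one_pow]
  -- existence of an element with nontrivial 2^{e-1}-st power
  have hz : ∃ z : Q, z ^ 2 ^ (e - 1) ≠ 1 := by
    by_contra h
    push_neg at h
    have := Monoid.exponent_dvd_of_forall_pow_eq_one h
    rw [hexp] at this
    have := (Nat.pow_dvd_pow_iff_le_right (by norm_num : 1 < 2)).mp this
    omega
  obtain ⟨z, hz⟩ := hz
  -- the generating set of involutions
  set S : Set Q :=
    π '' (Subtype.val ⁻¹' ({aPerm, b ω, c ω, d ω} : Set (Equiv.Perm (List Bool)))) with hS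
  have hSinv : ∀ s ∈ S, s * s = 1 := by
    rintro s ⟨t, ht, rfl⟩
    have htt : t * t = 1 := by
      apply Subtype.ext
      have := ht
      simp only [Set.mem_preimage, Set.mem_insert_iff, Set.mem_singleton_iff] at this
      rcases this with h | h | h | h <;>
        · show (t : Equiv.Perm (List Bool)) * t = 1
          rw [h]
          first
            | exact aPerm_sq
            | exact genPerm_sq _ ω
    rw [← map_mul, htt, map_one]
  have hSgen : Subgroup.closure S = ⊤ := by
    rw [hS, ← MonoidHom.map_closure]
    have hbase : Subgroup.closure
        (Subtype.val ⁻¹' ({aPerm, b ω, c ω, d ω} : Set (Equiv.Perm (List Bool)))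
          : Set ↥(G ω)) = ⊤ :=
      Subgroup.closure_closure_coe_preimage
    rw [hbase]
    exact Subgroup.map_top_of_surjective π (QuotientGroup.mk'_surjective _)
  have hqeven : Even (2 ^ (e - 1)) :=
    (Nat.even_pow).mpr ⟨even_iff_two_dvd.mpr dvd_rfl, by omega⟩
  exact not_semi_of_invol_gen S hSinv hSgen _ hqeven z hz


end Grig
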